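/- Let d ≥ 4 be even. There is a constant C₀ > 0 independent of q such that for every power q of an odd prime and every subset E ⊂ F_q^d, ‖E ∗ K̂‖_{L^∞(C,σ)} ≤ C₀ |E| / q^{d−1}, i.e., max_{x∈C} |E ∗ K̂(x)| ≤ C₀ |E| q^{−(d−1)}. -/

import Mathlib

open Finset MeasureTheory
open scoped ENNReal

namespace ConeFF

variable (F : Type) [Field F] [Fintype F] [DecidableEq F]

/-- The cone `C = {x ∈ F^d : x₁² + ⋯ + x_{d-2}² = x_{d-1} x_d}` (0-indexed). -/
def cone (d : ℕ) (hd : 3 ≤ d) : Finset (Fin d → F) :=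
  Finset.univ.filter fun x =>
    (∑ i ∈ Finset.univ.filter (fun i : Fin d => (i : ℕ) < d - 2), x i ^ 2) =
      x ⟨d - 2, by omega⟩ * x ⟨d - 1, by omega⟩

/-- The quadratic form `Γ(ξ) = ξ₁² + ⋯ + ξ_{d-2}² − 4 ξ_{d-1} ξ_d`. -/
def gammaForm (d : ℕ) (hd : 3 ≤ d) (ξ : Fin d → F) : F :=
  (∑ i ∈ Finset.univ.filter (fun i : Fin d => (i : ℕ) < d - 2), ξ i ^ 2) -
    4 * ξ ⟨d - 2, by omega⟩ * ξ ⟨d - 1, by omega⟩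

/-- Indicator function of a finite set, with values in `ℂ`. -/
def ind {V : Type} [DecidableEq V] (E : Finset V) : V → ℂ :=
  fun x => if x ∈ E then 1 else 0

/-- Convolution with respect to the normalized counting measure `dx`. -/
noncomputable def conv (d : ℕ) (f g : (Fin d → F) → ℂ) : (Fin d → F) → ℂ :=
  fun y => ((Fintype.card F : ℂ) ^ d)⁻¹ * ∑ x, f (y - x) * g x

/-- The averaging operator `f ∗ σ` over the cone. -/
noncomputable def avg (d : ℕ) (hd : 3 ≤ d) (f : (Fin d → F) → ℂ) : (Fin d → F) → ℂ :=
  fun y => ((cone F d hd).card : ℂ)⁻¹ * ∑ x ∈ cone F d hd, f (y - x)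

/-- Inverse Fourier transform `f^∨(m) = q^{-d} ∑_x χ(m·x) f(x)`. -/
noncomputable def invFT (d : ℕ) (χ : AddChar F ℂ) (f : (Fin d → F) → ℂ)
    (m : Fin d → F) : ℂ :=
  ((Fintype.card F : ℂ) ^ d)⁻¹ * ∑ x, χ (dotProduct m x) * f x

/-- Fourier transform `ĝ(x) = ∑_m χ(−m·x) g(m)` on the dual space. -/
noncomputable def ft (d : ℕ) (χ : AddChar F ℂ) (g : (Fin d → F) → ℂ)
    (x : Fin d → F) : ℂ :=
  ∑ m, χ (-(dotProduct m x)) * g m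

/-- `σ^∨(m) = |C|⁻¹ ∑_{x∈C} χ(m·x)`. -/
noncomputable def sigmaInv (d : ℕ) (hd : 3 ≤ d) (χ : AddChar F ℂ) (m : Fin d → F) : ℂ :=
  ((cone F d hd).card : ℂ)⁻¹ * ∑ x ∈ cone F d hd, χ (dotProduct m x)

/-- `K(m) = σ^∨(m) − δ₀(m)`. -/
noncomputable def Kfun (d : ℕ) (hd : 3 ≤ d) (χ : AddChar F ℂ) (m : Fin d → F) : ℂ :=
  sigmaInv F d hd χ m - if m = 0 then 1 else 0

/-- `M(m) = C^∨(m) − (|C|/q^d) δ₀(m)`. -/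
noncomputable def Mfun (d : ℕ) (hd : 3 ≤ d) (χ : AddChar F ℂ) (m : Fin d → F) : ℂ :=
  invFT F d χ (ind (cone F d hd)) m -
    if m = 0 then ((cone F d hd).card : ℂ) / (Fintype.card F : ℂ) ^ d else 0

/-- `L^p(C,σ)` norm (for finite `p`), with `σ` the normalized surface measure. -/
noncomputable def coneLpNorm (d : ℕ) (hd : 3 ≤ d) (p : ℝ) (h : (Fin d → F) → ℂ) : ℝ :=
  (((cone F d hd).card : ℝ)⁻¹ * ∑ x ∈ cone F d hd, ‖h x‖ ^ p) ^ (1 / p)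

/-- `L^p(F_q^d, dx)` norm (for finite `p`), with `dx` the normalized counting measure. -/
noncomputable def spaceLpNorm (d : ℕ) (p : ℝ) (f : (Fin d → F) → ℂ) : ℝ :=
  (((Fintype.card F : ℝ) ^ d)⁻¹ * ∑ x, ‖f x‖ ^ p) ^ (1 / p)

end ConeFF

/-!
By orthogonality of characters, `K̂ = (q^d / |C|) 1_C - 1`, so `‖K̂‖_∞ ≤ q^d / |C|`, and the
trivial bound `‖f ∗ g‖_∞ ≤ q^{-d} ‖f‖₁ ‖g‖_∞` gives `|E ∗ K̂(x)| ≤ |E| / |C|`. Finally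
`|C| ≥ q^{d-2} (q - 1) ≥ q^{d-1} / 2`: any `x₁, …, x_{d-2}` together with `x_{d-1} ≠ 0`
determine a unique point of the cone.
-/

namespace ConeFF

lemma sum_filter_val_lt_eq_sum_castLE {M : Type*} [AddCommMonoid M] {n k : ℕ} (h : k ≤ n) (g : Fin n → M) :
    ∑ i ∈ Finset.univ.filter (fun i : Fin n => (i : ℕ) < k), g i =
      ∑ j : Fin k, g (Fin.castLE h j) := by
  symm
  refine Finset.sum_bij (fun j _ => Fin.castLE h j) (fun j _ => by simp)
    (fun _ _ _ _ hab => Fin.castLE_injective h hab)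
    (fun i hi => ⟨⟨i, (Finset.mem_filter.1 hi).2⟩, Finset.mem_univ _, rfl⟩) (fun _ _ => rfl)

section

variable {F : Type} [Field F]

def coneParam (d : ℕ) (p : (Fin (d - 2) → F) × Fˣ) : Fin d → F := fun i =>
  if h : (i : ℕ) < d - 2 then p.1 ⟨i, h⟩
  else if (i : ℕ) = d - 2 then p.2
  else (∑ j, p.1 j ^ 2) * (p.2 : F)⁻¹

lemma coneParam_castLE (d : ℕ) (p : (Fin (d - 2) → F) × Fˣ) (j : Fin (d - 2)) :
    coneParam d p (Fin.castLE (Nat.sub_le d 2) j) = p.1 j := by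
  simp [coneParam]

lemma coneParam_sub_two (d : ℕ) (hd : 3 ≤ d) (p : (Fin (d - 2) → F) × Fˣ) :
    coneParam d p ⟨d - 2, by omega⟩ = p.2 := by
  simp [coneParam]

lemma coneParam_sub_one (d : ℕ) (hd : 3 ≤ d) (p : (Fin (d - 2) → F) × Fˣ) :
    coneParam d p ⟨d - 1, by omega⟩ = (∑ j, p.1 j ^ 2) * (p.2 : F)⁻¹ := by
  simp only [coneParam]
  rw [dif_neg (by omega), if_neg (by omega)]

lemma coneParam_injective (d : ℕ) (hd : 3 ≤ d) :
    Function.Injective (coneParam (F := F) d) := by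
  intro p p' h
  ext j
  · simpa only [coneParam_castLE] using congrFun h (Fin.castLE (Nat.sub_le d 2) j)
  · simpa only [coneParam_sub_two d hd] using congrFun h ⟨d - 2, by omega⟩

variable [Fintype F]

lemma ft_sub (d : ℕ) (χ : AddChar F ℂ) (f g : (Fin d → F) → ℂ) (x : Fin d → F) :
    ft F d χ (fun m => f m - g m) x = ft F d χ f x - ft F d χ g x := by
  simp only [ft, mul_sub, Finset.sum_sub_distrib]

lemma ft_const_mul (d : ℕ) (χ : AddChar F ℂ) (c : ℂ) (f : (Fin d → F) → ℂ) (x : Fin d → F) :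
    ft F d χ (fun m => c * f m) x = c * ft F d χ f x := by
  simp only [ft, Finset.mul_sum, mul_left_comm c]

variable [DecidableEq F]

lemma sum_addChar_dotProduct {ι : Type} [Fintype ι] [DecidableEq ι] {χ : AddChar F ℂ}
    (hχ : χ ≠ 1) (z : ι → F) :
    ∑ m : ι → F, χ (m ⬝ᵥ z) = if z = 0 then (Fintype.card F : ℂ) ^ Fintype.card ι else 0 := by
  split_ifs with hz
  · simp [hz]
  · let ψ : AddChar (ι → F) ℂ :=
      χ.compAddMonoidHom (AddMonoidHom.mk' (· ⬝ᵥ z) fun a b => add_dotProduct a b z)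
    have hψ : ψ ≠ 0 := by
      obtain ⟨a, ha⟩ := AddChar.ne_one_iff.1 hχ
      obtain ⟨j, hj⟩ := Function.ne_iff.1 hz
      refine AddChar.ne_zero_iff.2 ⟨Pi.single j (a * (z j)⁻¹), ?_⟩
      simpa [ψ, single_dotProduct, mul_assoc, inv_mul_cancel₀ hj] using ha
    exact AddChar.sum_eq_zero_iff_ne_zero.2 hψ

lemma ft_delta (d : ℕ) (χ : AddChar F ℂ) (x : Fin d → F) :
    ft F d χ (fun m => if m = 0 then 1 else 0) x = 1 := by
  simp [ft]

lemma ft_sum_addChar_dotProduct (d : ℕ) {χ : AddChar F ℂ} (hχ : χ ≠ 1)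
    (S : Finset (Fin d → F)) (x : Fin d → F) :
    ft F d χ (fun m => ∑ y ∈ S, χ (m ⬝ᵥ y)) x = (Fintype.card F : ℂ) ^ d * ind S x := by
  have hphase : ∀ m y : Fin d → F, -(m ⬝ᵥ x) + m ⬝ᵥ y = m ⬝ᵥ (y - x) := by
    intro m y
    rw [dotProduct_sub]
    ring
  simp only [ft, Finset.mul_sum, ← AddChar.map_add_eq_mul, hphase]
  rw [Finset.sum_comm]
  simp only [sum_addChar_dotProduct hχ, sub_eq_zero, Fintype.card_fin, Finset.sum_ite_eq', ind,
    mul_ite, mul_one, mul_zero]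

lemma ft_Kfun (d : ℕ) (hd : 3 ≤ d) {χ : AddChar F ℂ} (hχ : χ ≠ 1) (x : Fin d → F) :
    ft F d χ (Kfun F d hd χ) x =
      (Fintype.card F : ℂ) ^ d / (cone F d hd).card * ind (cone F d hd) x - 1 := by
  change ft F d χ (fun m => ((cone F d hd).card : ℂ)⁻¹ * ∑ y ∈ cone F d hd, χ (m ⬝ᵥ y) -
    if m = 0 then 1 else 0) x = _
  rw [ft_sub, ft_const_mul, ft_sum_addChar_dotProduct d hχ, ft_delta]
  ring

lemma card_cone_pos (d : ℕ) (hd : 3 ≤ d) : 0 < (cone F d hd).card :=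
  Finset.card_pos.2 ⟨0, by simp [cone]⟩

lemma norm_ft_Kfun_le (d : ℕ) (hd : 3 ≤ d) {χ : AddChar F ℂ} (hχ : χ ≠ 1) (x : Fin d → F) :
    ‖ft F d χ (Kfun F d hd χ) x‖ ≤ (Fintype.card F : ℝ) ^ d / (cone F d hd).card := by
  set a : ℝ := (Fintype.card F : ℝ) ^ d / (cone F d hd).card
  have ha : 1 ≤ a := by
    have hCq : (cone F d hd).card ≤ Fintype.card F ^ d := by
      simpa [Fintype.card_fun] using Finset.card_le_univ (cone F d hd)
    rw [one_le_div (by exact_mod_cast card_cone_pos d hd)]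
    exact_mod_cast hCq
  have hft : ft F d χ (Kfun F d hd χ) x = (a : ℂ) * ind (cone F d hd) x - 1 := by
    simp [a, ft_Kfun d hd hχ]
  rw [hft, ind]
  split_ifs
  · rw [mul_one, ← Complex.ofReal_one, ← Complex.ofReal_sub, Complex.norm_real,
      Real.norm_of_nonneg (by linarith)]
    linarith
  · simpa using ha

lemma sum_norm_ind_sub (d : ℕ) (E : Finset (Fin d → F)) (x : Fin d → F) :
    ∑ m, ‖ind E (x - m)‖ = E.card := by
  rw [Fintype.sum_equiv (Equiv.subLeft x) (fun m => ‖ind E (x - m)‖) (fun z => ‖ind E z‖)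
    fun _ => rfl]
  simp [ind, apply_ite (‖·‖)]

lemma norm_conv_ind_le (d : ℕ) (E : Finset (Fin d → F)) {g : (Fin d → F) → ℂ} {B : ℝ}
    (hg : ∀ m, ‖g m‖ ≤ B) (x : Fin d → F) :
    ‖conv F d (ind E) g x‖ ≤ E.card * B / (Fintype.card F : ℝ) ^ d := by
  have hsum : ‖∑ m, ind E (x - m) * g m‖ ≤ E.card * B :=
    calc ‖∑ m, ind E (x - m) * g m‖
        ≤ ∑ m, ‖ind E (x - m)‖ * B := by
          refine (norm_sum_le _ _).trans (Finset.sum_le_sum fun m _ => ?_)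
          rw [norm_mul]
          exact mul_le_mul_of_nonneg_left (hg m) (norm_nonneg _)
      _ = E.card * B := by rw [← Finset.sum_mul, sum_norm_ind_sub]
  rw [conv, norm_mul, norm_inv, norm_pow, Complex.norm_natCast, inv_mul_eq_div]
  gcongr

lemma norm_conv_ind_ft_Kfun_le (d : ℕ) (hd : 3 ≤ d) {χ : AddChar F ℂ} (hχ : χ ≠ 1)
    (E : Finset (Fin d → F)) (x : Fin d → F) :
    ‖conv F d (ind E) (ft F d χ (Kfun F d hd χ)) x‖ ≤ E.card / (cone F d hd).card := by
  refine (norm_conv_ind_le d E (norm_ft_Kfun_le d hd hχ) x).trans_eq ?_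
  have hq : (Fintype.card F : ℝ) ^ d ≠ 0 := by positivity
  field_simp

lemma coneParam_mem_cone (d : ℕ) (hd : 3 ≤ d) (p : (Fin (d - 2) → F) × Fˣ) :
    coneParam d p ∈ cone F d hd := by
  simp only [cone, Finset.mem_filter, Finset.mem_univ, true_and,
    sum_filter_val_lt_eq_sum_castLE (Nat.sub_le d 2), coneParam_castLE, coneParam_sub_two d hd,
    coneParam_sub_one d hd]
  field_simp

lemma card_pow_mul_pred_le_card_cone (d : ℕ) (hd : 3 ≤ d) :
    Fintype.card F ^ (d - 2) * (Fintype.card F - 1) ≤ (cone F d hd).card := by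
  calc Fintype.card F ^ (d - 2) * (Fintype.card F - 1)
      = (Finset.univ : Finset ((Fin (d - 2) → F) × Fˣ)).card := by
        simp [Fintype.card_units]
    _ ≤ (cone F d hd).card :=
        Finset.card_le_card_of_injOn _ (fun p _ => coneParam_mem_cone d hd p)
          (coneParam_injective d hd).injOn

lemma card_pow_pred_le_two_mul_card_cone (d : ℕ) (hd : 3 ≤ d) :
    Fintype.card F ^ (d - 1) ≤ 2 * (cone F d hd).card := by
  have hq : 2 ≤ Fintype.card F := Fintype.one_lt_card
  calc Fintype.card F ^ (d - 1) = Fintype.card F ^ (d - 2) * Fintype.card F := by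
        rw [← pow_succ]
        congr 1
        omega
    _ ≤ Fintype.card F ^ (d - 2) * (2 * (Fintype.card F - 1)) := by gcongr; omega
    _ ≤ 2 * (cone F d hd).card := by
        rw [mul_left_comm]
        exact Nat.mul_le_mul_left 2 (card_pow_mul_pred_le_card_cone d hd)

end

/-- `‖E ∗ K̂‖_{L^∞(C,σ)} ≲ |E| q^{-(d-1)}` for even `d ≥ 4`. -/
theorem statement9 (d : ℕ) (hd : 4 ≤ d) :
    ∃ C₀ : ℝ, 0 < C₀ ∧
      ∀ (F : Type) [Field F] [Fintype F] [DecidableEq F], ringChar F ≠ 2 →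
        ∀ χ : AddChar F ℂ, (∃ a, χ a ≠ 1) →
          ∀ E : Finset (Fin d → F), ∀ x ∈ cone F d (by omega),
            ‖conv F d (ind E) (ft F d χ (Kfun F d (by omega) χ)) x‖ ≤
              C₀ * (E.card : ℝ) / (Fintype.card F : ℝ) ^ (d - 1) := by
  refine ⟨2, two_pos, fun F _ _ _ _ χ hχ E x _ => ?_⟩
  have h3 : 3 ≤ d := by omega
  have hcard : (Fintype.card F : ℝ) ^ (d - 1) ≤ 2 * (cone F d h3).card := by
    exact_mod_cast card_pow_pred_le_two_mul_card_cone d h3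
  have hC : (0 : ℝ) < (cone F d h3).card := by exact_mod_cast card_cone_pos d h3
  refine (norm_conv_ind_ft_Kfun_le d h3 (AddChar.ne_one_iff.2 hχ) E x).trans ?_
  rw [div_le_div_iff₀ hC (by positivity)]
  calc (E.card : ℝ) * (Fintype.card F : ℝ) ^ (d - 1) ≤ E.card * (2 * (cone F d h3).card) := by
        gcongr
    _ = 2 * E.card * (cone F d h3).card := by ring

end ConeFF
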